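/- arXiv:1503.04460 — 3 statements merged into one kernel-verified Lean document; each statement's English description precedes it below -/
import Mathlib

section
/- Let ρ₁, …, ρₙ be distortion risk measures that are finite and norm-continuous on Lᵖ (p ∈ [1, ∞)), let λ₁, …, λₙ > 0, let M₁, …, Mₙ be closed convex cones in Lᵖ, and let X₀ ∈ Lᵖ be bounded below. For any map ψ : Lᵖ → ℝ ∪ {+∞} and cone M, write ψ^M(X) = ψ(X) if X ∈ M and ψ^M(X) = +∞ otherwise. If an allocation (X₁, …, Xₙ) with X₁ + ⋯ + Xₙ = X₀ minimizes Σᵢ λᵢ ρ̃ᵢ^{Mᵢ}(Xᵢ) over all allocations of X₀ for every tuple (ρ̃₁, …, ρ̃ₙ) of lower semicontinuous coherent risk measures with ρ̃ᵢ ≥ ρᵢ (pointwise) for each i, then (X₁, …, Xₙ) minimizes Σᵢ λᵢ ρᵢ^{Mᵢ}(Xᵢ) over all allocations of X₀. -/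
open MeasureTheory Filter
open scoped ENNReal Pointwise Classical

noncomputable section

variable {Ω : Type*} [MeasurableSpace Ω]

/-- The dual set `Δ_φ = {Y ∈ L^q | E(XY) ≤ φ(X) for all X ∈ L^p}`. -/
def dualSet (P : Measure Ω) (p q : ℝ≥0∞) (φ : Lp ℝ p P → EReal) : Set (Lp ℝ q P) :=
  {Y | ∀ X : Lp ℝ p P, ((∫ ω, X ω * Y ω ∂P : ℝ) : EReal) ≤ φ X}

/-- The infimal convolution `φ₁ □ ⋯ □ φₙ`. -/
def infConv (P : Measure Ω) (p : ℝ≥0∞) {n : ℕ} (φ : Fin n → (Lp ℝ p P → EReal))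
    (X : Lp ℝ p P) : EReal :=
  ⨅ (Xs : Fin n → Lp ℝ p P) (_ : ∑ i, Xs i = X), ∑ i, φ i (Xs i)

/-- The convex conjugate `φ*(Y) = sup_X E(XY) − φ(X)`. -/
def conjugate (P : Measure Ω) (p q : ℝ≥0∞) (φ : Lp ℝ p P → EReal) (Y : Lp ℝ q P) : EReal :=
  ⨆ X : Lp ℝ p P, ((∫ ω, X ω * Y ω ∂P : ℝ) : EReal) - φ X

/-- A (lower semicontinuous) coherent risk measure on `L^p`, with values in `ℝ ∪ {+∞}`:
positively homogeneous, cash-invariant, monotone and subadditive. -/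
structure IsCoherentRiskMeasure (P : Measure Ω) [IsFiniteMeasure P] (p : ℝ≥0∞) [Fact (1 ≤ p)]
    (ρ : Lp ℝ p P → EReal) : Prop where
  ne_bot : ∀ X, ρ X ≠ ⊥
  lsc : LowerSemicontinuous ρ
  posHom : ∀ (c : ℝ), 0 < c → ∀ X, ρ (c • X) = (c : EReal) * ρ X
  cash : ∀ (c : ℝ) (X : Lp ℝ p P), ρ (X + (memLp_const c).toLp (fun _ => c)) = ρ X + (c : EReal)
  mono : ∀ X Y : Lp ℝ p P, (X : Ω → ℝ) ≤ᵐ[P] (Y : Ω → ℝ) → ρ X ≤ ρ Y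
  subadd : ∀ X Y : Lp ℝ p P, ρ (X + Y) ≤ ρ X + ρ Y


/-- `VaR_t(X) = inf {x ∈ ℝ | P(X > x) ≤ 1 − t}`. -/
def VaR (P : Measure Ω) (X : Ω → ℝ) (t : ℝ) : ℝ :=
  sInf {x : ℝ | P {ω | x < X ω} ≤ ENNReal.ofReal (1 - t)}

/-- A distortion kernel: a nondecreasing right-continuous `Φ : [0,1] → [0,1]` with
`Φ(0) = 0` and `Φ(1) = 1`, modelled as a Stieltjes function on `ℝ` extended by `0`
to the left of `0` and by `1` to the right of `1`. -/
structure DistortionKernel where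
  toStieltjes : StieltjesFunction ℝ
  zero_of_nonpos : ∀ x : ℝ, x ≤ 0 → toStieltjes x = 0
  one_of_one_le : ∀ x : ℝ, 1 ≤ x → toStieltjes x = 1

/-- The distortion risk measure `ρ_Φ(X) = ∫₀¹ VaR_t(X) dΦ(t)` (integral against the
Lebesgue–Stieltjes measure of `Φ`). -/
def distortionRisk (P : Measure Ω) (K : DistortionKernel) (X : Ω → ℝ) : ℝ :=
  ∫ t in Set.Ioc (0 : ℝ) 1, VaR P X t ∂K.toStieltjes.measure

/-- The cumulative distribution function `F_X(x) = P(X ≤ x)`. -/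
def cdf (P : Measure Ω) (X : Ω → ℝ) (x : ℝ) : ℝ :=
  (P {ω | X ω ≤ x}).toReal

/-- `ψ^M`: the function `ψ` restricted to the set `M` (equal to `+∞` off `M`). -/
def restrictFn {P : Measure Ω} {p : ℝ≥0∞} (ψ : Lp ℝ p P → EReal) (M : Set (Lp ℝ p P)) :
    Lp ℝ p P → EReal :=
  fun X => if X ∈ M then ψ X else ⊤


/-!
Fix an allocation `Ys` of `X₀`. For each `i` we build a lower semicontinuous coherent risk
measure `ρ̃ᵢ ≥ ρᵢ` with `ρ̃ᵢ(Ysᵢ) ≤ ρᵢ(Ysᵢ)`; the optimality of `Xs` against `(ρ̃ᵢ)` is then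
sandwiched between the objectives for `(ρᵢ)` at `Xs` and at `Ys`.

For a risk functional `ρ` that is monotone, positively homogeneous and cash invariant, and a
point `Y`, the functional `Z ↦ inf {c ρ(Y) + s : c > 0, Z ≤ c Y + s}` is the smallest such
functional with value `ρ(Y)` at `Y`; it is moreover subadditive, since the bounds `Z ≤ c Y + s`
add up. Its lower semicontinuous hull keeps all these properties and still dominates `ρ` when `ρ` is
continuous, so it is the required `ρ̃`. A distortion risk measure has these properties: `VaR`
commutes with increasing affine maps, which gives them for variables bounded above, and the
truncations `min Z k` converge to `Z` in `Lᵖ`, which gives them in general.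
-/

open Set Topology

section LscHull

variable {X : Type*} [TopologicalSpace X] {f g : X → EReal}

def lscHull (f : X → EReal) (x : X) : EReal :=
  liminf f (𝓝 x)

lemma lscHull_le_self (x : X) : lscHull f x ≤ f x :=
  liminf_le_of_frequently_le (frequently_iff.2 fun hU => ⟨x, mem_of_mem_nhds hU, le_rfl⟩)

lemma lscHull_mono (h : f ≤ g) : lscHull f ≤ lscHull g := fun _ =>
  liminf_le_liminf (Eventually.of_forall h)

lemma LowerSemicontinuous.le_lscHull (hg : LowerSemicontinuous g) (hgf : g ≤ f) :
    g ≤ lscHull f := fun x =>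
  (hg.le_liminf x).trans (lscHull_mono hgf x)

lemma lowerSemicontinuous_lscHull : LowerSemicontinuous (lscHull f) := by
  intro x y hy
  obtain ⟨y', hyy', hy'⟩ := exists_between hy
  obtain ⟨U, hU, hUopen, hxU⟩ := eventually_nhds_iff.1 (eventually_lt_of_lt_liminf hy')
  filter_upwards [hUopen.mem_nhds hxU] with z hz
  exact hyy'.trans_le <| le_liminf_of_le (by isBoundedDefault) <|
    eventually_nhds_iff.2 ⟨U, fun w hw => (hU w hw).le, hUopen, hz⟩

lemma lscHull_comp_homeomorph {X' : Type*} [TopologicalSpace X'] (e : X' ≃ₜ X) (x : X') :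
    lscHull (f ∘ e) x = lscHull f (e x) := by
  rw [lscHull, lscHull, ← e.map_nhds_eq]
  rfl

lemma lscHull_orderIso_comp (e : EReal ≃o EReal) (x : X) :
    lscHull (e ∘ f) x = e (lscHull f x) :=
  e.liminf_apply.symm

lemma lscHull_add_le [Add X] [ContinuousAdd X] (hf : ∀ x y, f (x + y) ≤ f x + f y) {x y : X}
    (hx : lscHull f x ≠ ⊥) (hy : lscHull f y ≠ ⊥) :
    lscHull f (x + y) ≤ lscHull f x + lscHull f y := by
  refine EReal.le_add_of_forall_gt (.inl hx) (.inr hy) fun a ha b hb => ?_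
  have hfreq : ∃ᶠ q in 𝓝 x ×ˢ 𝓝 y, f q.1 < a ∧ f q.2 < b :=
    frequently_prod_and.2 ⟨frequently_lt_of_liminf_lt (by isBoundedDefault) ha,
      frequently_lt_of_liminf_lt (by isBoundedDefault) hb⟩
  refine liminf_le_of_frequently_le ?_
  refine (nhds_prod_eq (x := x) (y := y) ▸ tendsto_add).frequently_map _ (fun q hq => ?_) hfreq
  exact (hf q.1 q.2).trans (add_le_add hq.1.le hq.2.le)

end LscHull

namespace EReal

def addCoeOrderIso (a : ℝ) : EReal ≃o EReal where
  toFun x := x + a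
  invFun x := x - a
  left_inv _ := add_sub_cancel_right
  right_inv _ := sub_add_cancel
  map_rel_iff' := (addLECancellable_coe a).add_le_add_iff_right

@[simp] lemma addCoeOrderIso_apply (a : ℝ) (x : EReal) : addCoeOrderIso a x = x + a := rfl

lemma coe_inv_mul_coe_mul {c : ℝ} (hc : c ≠ 0) (x : EReal) :
    ((c⁻¹ : ℝ) : EReal) * (c * x) = x := by
  rw [← mul_assoc, ← coe_mul, inv_mul_cancel₀ hc, coe_one, one_mul]

def mulCoeOrderIso (c : ℝ) (hc : 0 < c) : EReal ≃o EReal :=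
  Equiv.toOrderIso
    { toFun x := c * x
      invFun x := ((c⁻¹ : ℝ) : EReal) * x
      left_inv := coe_inv_mul_coe_mul hc.ne'
      right_inv x := by simpa using coe_inv_mul_coe_mul (inv_ne_zero hc.ne') x }
    (fun _ _ h => mul_le_mul_of_nonneg_left h (EReal.coe_nonneg.2 hc.le))
    (fun _ _ h => mul_le_mul_of_nonneg_left h (EReal.coe_nonneg.2 (inv_nonneg.2 hc.le)))

@[simp] lemma mulCoeOrderIso_apply (c : ℝ) (hc : 0 < c) (x : EReal) :
    mulCoeOrderIso c hc x = c * x := rfl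

end EReal

namespace MeasureTheory

lemma unifIntegrable_of_ae_norm_le {ι α β γ : Type*} [MeasurableSpace α] {μ : Measure α}
    [NormedAddCommGroup β] [NormedAddCommGroup γ] {p : ℝ≥0∞} (hp : 1 ≤ p) (hp' : p ≠ ∞)
    {f : ι → α → β} {g : α → γ} (hg : MemLp g p μ) (hfg : ∀ i, ∀ᵐ x ∂μ, ‖f i x‖ ≤ ‖g x‖) :
    UnifIntegrable f p μ := by
  intro ε hε
  obtain ⟨δ, hδ, hgδ⟩ := hg.eLpNorm_indicator_le hp hp' hε
  refine ⟨δ, hδ, fun i s hs hμs => (eLpNorm_mono_ae ?_).trans (hgδ s hs hμs)⟩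
  filter_upwards [hfg i] with x hx
  by_cases hxs : x ∈ s <;> simp [hxs, hx]

variable {μ : Measure Ω} [IsFiniteMeasure μ] {p : ℝ≥0∞}

def constLp (μ : Measure Ω) [IsFiniteMeasure μ] (p : ℝ≥0∞) (c : ℝ) : Lp ℝ p μ :=
  (memLp_const c).toLp fun _ => c

lemma coeFn_constLp (c : ℝ) : ⇑(constLp μ p c) =ᵐ[μ] fun _ => c :=
  (memLp_const c).coeFn_toLp

lemma coeFn_smul_add_constLp (Y : Lp ℝ p μ) (c s : ℝ) :
    ⇑(c • Y + constLp μ p s) =ᵐ[μ] fun ω => c * Y ω + s := by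
  filter_upwards [Lp.coeFn_add (c • Y) (constLp μ p s), Lp.coeFn_smul c Y, coeFn_constLp s]
    with ω h₁ h₂ h₃
  rw [h₁, Pi.add_apply, h₂, h₃, Pi.smul_apply, smul_eq_mul]

lemma coeFn_inf_constLp (Z : Lp ℝ p μ) (c : ℝ) :
    ⇑(Z ⊓ constLp μ p c) =ᵐ[μ] fun ω => min (Z ω) c := by
  filter_upwards [Lp.coeFn_inf Z (constLp μ p c), coeFn_constLp c] with ω h₁ h₂
  rw [h₁, Pi.inf_apply, h₂]

lemma inf_constLp_le (Z : Lp ℝ p μ) (c : ℝ) : ∀ᵐ ω ∂μ, (Z ⊓ constLp μ p c) ω ≤ c := by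
  filter_upwards [coeFn_inf_constLp Z c] with ω h
  exact h ▸ min_le_right _ _

lemma inf_constLp_mono {Z W : Lp ℝ p μ} (h : ⇑Z ≤ᵐ[μ] ⇑W) (c : ℝ) :
    ⇑(Z ⊓ constLp μ p c) ≤ᵐ[μ] ⇑(W ⊓ constLp μ p c) := by
  filter_upwards [coeFn_inf_constLp Z c, coeFn_inf_constLp W c, h] with ω hZ hW h
  rw [hZ, hW]
  exact min_le_min_right _ h

lemma tendsto_inf_constLp_natCast [Fact (1 ≤ p)] (hp : p ≠ ∞) (Z : Lp ℝ p μ) :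
    Tendsto (fun k : ℕ => Z ⊓ constLp μ p k) atTop (𝓝 Z) := by
  have hae : ∀ᵐ ω ∂μ, ∀ k : ℕ, (Z ⊓ constLp μ p k) ω = min (Z ω) k :=
    ae_all_iff.2 fun k => coeFn_inf_constLp Z k
  have hdom : ∀ k : ℕ, ∀ᵐ ω ∂μ, ‖(Z ⊓ constLp μ p k) ω‖ ≤ ‖Z ω‖ := fun k => by
    filter_upwards [hae] with ω hω
    rw [hω, Real.norm_eq_abs, Real.norm_eq_abs]
    exact abs_le.2 ⟨le_min (neg_abs_le _) ((neg_nonpos.2 (abs_nonneg _)).trans k.cast_nonneg),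
      (min_le_left _ _).trans (le_abs_self _)⟩
  have hlim : ∀ᵐ ω ∂μ, Tendsto (fun k : ℕ => (Z ⊓ constLp μ p k) ω) atTop (𝓝 (Z ω)) := by
    filter_upwards [hae] with ω hω
    refine tendsto_const_nhds.congr' ?_
    filter_upwards [eventually_ge_atTop ⌈Z ω⌉₊] with k hk
    rw [hω, min_eq_left (Nat.ceil_le.1 hk)]
  rw [Lp.tendsto_Lp_iff_tendsto_eLpNorm']
  exact tendsto_Lp_finite_of_tendsto_ae Fact.out hp (fun k => Lp.aestronglyMeasurable _)
    (Lp.memLp Z) (unifIntegrable_of_ae_norm_le Fact.out hp (Lp.memLp Z) hdom) hlim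

end MeasureTheory

section VaR

variable {P : Measure Ω}

def quantileSet (P : Measure Ω) (X : Ω → ℝ) (t : ℝ) : Set ℝ :=
  {x | P {ω | x < X ω} ≤ ENNReal.ofReal (1 - t)}

lemma VaR_eq_sInf_quantileSet (X : Ω → ℝ) (t : ℝ) : VaR P X t = sInf (quantileSet P X t) := rfl

lemma VaR_congr {X X' : Ω → ℝ} (h : X =ᵐ[P] X') (t : ℝ) : VaR P X t = VaR P X' t := by
  have hm : ∀ x : ℝ, P {ω | x < X ω} = P {ω | x < X' ω} := fun x =>
    measure_congr <| h.mono fun ω hω => congrArg (x < ·) hω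
  simp only [VaR, hm]

lemma bddBelow_quantileSet [IsProbabilityMeasure P] (X : Ω → ℝ) {t : ℝ} (ht : 0 < t) :
    BddBelow (quantileSet P X t) := by
  have hmono : Monotone fun y : ℝ => {ω | -y < X ω} := fun y y' h ω hω =>
    (neg_le_neg h).trans_lt hω
  have hU : ⋃ y : ℝ, {ω | -y < X ω} = univ :=
    eq_univ_of_forall fun ω => mem_iUnion.2 ⟨-X ω + 1, by simp⟩
  have htend := tendsto_measure_iUnion_atTop (μ := P) hmono
  rw [hU, measure_univ] at htend
  obtain ⟨y, hy⟩ :=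
    (htend.eventually (lt_mem_nhds (ENNReal.ofReal_lt_one.2 (by linarith : 1 - t < 1)))).exists
  refine ⟨-y, fun x hx => not_lt.1 fun hxy => lt_irrefl _ <|
    hy.trans_le ((measure_mono fun ω hω => hxy.trans hω).trans hx)⟩

lemma mem_quantileSet_of_ae_le {X : Ω → ℝ} {b : ℝ} (hb : ∀ᵐ ω ∂P, X ω ≤ b) (t : ℝ) :
    b ∈ quantileSet P X t := by
  have hb' : P {ω | b < X ω} = 0 := by simpa only [not_le] using ae_iff.1 hb
  simp [quantileSet, hb']

variable [IsProbabilityMeasure P] {t : ℝ}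

lemma VaR_mono_of_ae_le {X W : Ω → ℝ} (h : X ≤ᵐ[P] W) {b : ℝ} (hb : ∀ᵐ ω ∂P, W ω ≤ b)
    (ht : 0 < t) : VaR P X t ≤ VaR P W t :=
  csInf_le_csInf (bddBelow_quantileSet X ht) ⟨b, mem_quantileSet_of_ae_le hb t⟩ fun _ hx =>
    (measure_mono_ae (h.mono fun _ hω hlt => hlt.trans_le hω)).trans hx

lemma VaR_orderIso_comp (e : ℝ ≃o ℝ) {X : Ω → ℝ} {b : ℝ} (hb : ∀ᵐ ω ∂P, X ω ≤ b)
    (ht : 0 < t) : VaR P (e ∘ X) t = e (VaR P X t) := by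
  have hset : quantileSet P (e ∘ X) t = e '' quantileSet P X t := by
    ext x
    simp only [e.image_eq_preimage_symm, quantileSet, mem_preimage, mem_ofPred_eq,
      Function.comp, ← e.symm_apply_lt]
  rw [VaR_eq_sInf_quantileSet, VaR_eq_sInf_quantileSet, hset,
    e.map_csInf' ⟨b, mem_quantileSet_of_ae_le hb t⟩ (bddBelow_quantileSet X ht)]

lemma VaR_mul_add {X : Ω → ℝ} {b : ℝ} (hb : ∀ᵐ ω ∂P, X ω ≤ b) {c : ℝ} (hc : 0 < c) (s : ℝ)
    (ht : 0 < t) : VaR P (fun ω => c * X ω + s) t = c * VaR P X t + s :=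
  VaR_orderIso_comp ((OrderIso.mulLeft₀ c hc).trans (OrderIso.addRight s)) hb ht

end VaR

lemma DistortionKernel.measure_Ioc_zero_one (K : DistortionKernel) :
    K.toStieltjes.measure (Ioc 0 1) = 1 := by
  rw [StieltjesFunction.measure_Ioc, K.one_of_one_le 1 le_rfl, K.zero_of_nonpos 0 le_rfl]
  simp

lemma distortionRisk_congr {P : Measure Ω} (K : DistortionKernel) {X X' : Ω → ℝ}
    (h : X =ᵐ[P] X') : distortionRisk P K X = distortionRisk P K X' := by
  simp only [distortionRisk, VaR_congr h]

section DistortionRisk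

variable {P : Measure Ω} [IsProbabilityMeasure P] (K : DistortionKernel)

lemma distortionRisk_mono_of_ae_le {X W : Ω → ℝ}
    (hX : IntegrableOn (VaR P X) (Ioc 0 1) K.toStieltjes.measure)
    (hW : IntegrableOn (VaR P W) (Ioc 0 1) K.toStieltjes.measure)
    (h : X ≤ᵐ[P] W) {b : ℝ} (hb : ∀ᵐ ω ∂P, W ω ≤ b) :
    distortionRisk P K X ≤ distortionRisk P K W :=
  setIntegral_mono_on hX hW measurableSet_Ioc fun _ ht => VaR_mono_of_ae_le h hb ht.1

lemma distortionRisk_mul_add_of_ae_le {X : Ω → ℝ}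
    (hX : IntegrableOn (VaR P X) (Ioc 0 1) K.toStieltjes.measure) {b : ℝ}
    (hb : ∀ᵐ ω ∂P, X ω ≤ b) {c : ℝ} (hc : 0 < c) (s : ℝ) :
    distortionRisk P K (fun ω => c * X ω + s) = c * distortionRisk P K X + s := by
  have : IsProbabilityMeasure (K.toStieltjes.measure.restrict (Ioc 0 1)) :=
    ⟨by rw [Measure.restrict_apply_univ, K.measure_Ioc_zero_one]⟩
  rw [distortionRisk, setIntegral_congr_fun measurableSet_Ioc fun t ht => VaR_mul_add hb hc s ht.1,
    integral_add (hX.const_mul c) (integrable_const s), integral_const_mul, integral_const]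
  simp [distortionRisk]

variable {p : ℝ≥0∞} [Fact (1 ≤ p)] (hp : p ≠ ∞)
  (hfin : ∀ X : Lp ℝ p P, IntegrableOn (fun t => VaR P (⇑X) t) (Ioc 0 1) K.toStieltjes.measure)
  (hcont : Continuous fun X : Lp ℝ p P => distortionRisk P K ⇑X)
include hp hfin hcont

lemma distortionRisk_mono {Z W : Lp ℝ p P} (h : ⇑Z ≤ᵐ[P] ⇑W) :
    distortionRisk P K ⇑Z ≤ distortionRisk P K ⇑W :=
  le_of_tendsto_of_tendsto' ((hcont.tendsto Z).comp (tendsto_inf_constLp_natCast hp Z))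
    ((hcont.tendsto W).comp (tendsto_inf_constLp_natCast hp W)) fun k =>
    distortionRisk_mono_of_ae_le K (hfin _) (hfin _) (inf_constLp_mono h k) (inf_constLp_le W k)

lemma distortionRisk_smul_add_constLp (Y : Lp ℝ p P) {c : ℝ} (hc : 0 < c) (s : ℝ) :
    distortionRisk P K ⇑(c • Y + constLp P p s) = c * distortionRisk P K ⇑Y + s := by
  have htrunc (k : ℕ) : distortionRisk P K ⇑(c • (Y ⊓ constLp P p k) + constLp P p s) =
      c * distortionRisk P K ⇑(Y ⊓ constLp P p k) + s := by
    rw [distortionRisk_congr K (coeFn_smul_add_constLp _ c s)]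
    exact distortionRisk_mul_add_of_ae_le K (hfin _) (inf_constLp_le Y k) hc s
  have hY := tendsto_inf_constLp_natCast hp Y
  refine tendsto_nhds_unique ?_ ((((hcont.tendsto Y).comp hY).const_mul c).add_const s)
  exact ((hcont.tendsto _).comp ((hY.const_smul c).add tendsto_const_nhds)).congr htrunc

end DistortionRisk

section MajorantRisk

variable {μ : Measure Ω} {p : ℝ≥0∞}

/-- The smallest monotone, positively homogeneous and cash-invariant functional that is at most
`r` at `Y`. -/
def majorantRisk (Y : Lp ℝ p μ) (r : ℝ) (Z : Lp ℝ p μ) : EReal :=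
  ⨅ (q : ℝ × ℝ) (_ : 0 < q.1 ∧ ∀ᵐ ω ∂μ, Z ω ≤ q.1 * Y ω + q.2), ((q.1 * r + q.2 : ℝ) : EReal)

variable {Y Z W : Lp ℝ p μ} {r : ℝ}

lemma majorantRisk_le {c s : ℝ} (hc : 0 < c) (h : ∀ᵐ ω ∂μ, Z ω ≤ c * Y ω + s) :
    majorantRisk Y r Z ≤ ((c * r + s : ℝ) : EReal) :=
  iInf₂_le (c, s) ⟨hc, h⟩

lemma le_majorantRisk {x : EReal}
    (h : ∀ c s : ℝ, 0 < c → (∀ᵐ ω ∂μ, Z ω ≤ c * Y ω + s) → x ≤ ((c * r + s : ℝ) : EReal)) :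
    x ≤ majorantRisk Y r Z :=
  le_iInf₂ fun q hq => h q.1 q.2 hq.1 hq.2

lemma majorantRisk_self_le : majorantRisk Y r Y ≤ r := by
  simpa using majorantRisk_le (r := r) one_pos (s := 0) (Eventually.of_forall fun ω => by simp)

lemma majorantRisk_mono (h : ⇑Z ≤ᵐ[μ] ⇑W) : majorantRisk Y r Z ≤ majorantRisk Y r W :=
  le_majorantRisk fun _ _ hc hW => majorantRisk_le hc (h.trans hW)

lemma majorantRisk_add_constLp [IsFiniteMeasure μ] (Z : Lp ℝ p μ) (a : ℝ) :
    majorantRisk Y r (Z + constLp μ p a) = majorantRisk Y r Z + a := by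
  have hZa : ⇑(Z + constLp μ p a) =ᵐ[μ] fun ω => Z ω + a :=
    (Lp.coeFn_add _ _).trans ((coeFn_constLp (p := p) a).mono fun ω h => by simp [h])
  let e := EReal.addCoeOrderIso a
  apply le_antisymm
  · refine e.symm_apply_le.1 (le_majorantRisk fun c s hc h => e.symm_apply_le.2 ?_)
    have hcert : ∀ᵐ ω ∂μ, (Z + constLp μ p a) ω ≤ c * Y ω + (s + a) := by
      filter_upwards [hZa, h] with ω h₁ h₂
      linarith
    simpa [e, add_assoc] using majorantRisk_le hc hcert
  · refine le_majorantRisk fun c s hc h => ?_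
    have hcert : ∀ᵐ ω ∂μ, Z ω ≤ c * Y ω + (s - a) := by
      filter_upwards [hZa, h] with ω h₁ h₂
      linarith
    calc majorantRisk Y r Z + a ≤ ((c * r + (s - a) : ℝ) : EReal) + a := by
          gcongr
          exact majorantRisk_le hc hcert
      _ = ((c * r + s : ℝ) : EReal) := by norm_cast; ring

lemma majorantRisk_smul (Z : Lp ℝ p μ) {a : ℝ} (ha : 0 < a) :
    majorantRisk Y r (a • Z) = a * majorantRisk Y r Z := by
  have hZa : ⇑(a • Z) =ᵐ[μ] fun ω => a * Z ω := Lp.coeFn_smul a Z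
  let e := EReal.mulCoeOrderIso a ha
  apply le_antisymm
  · refine e.symm_apply_le.1 (le_majorantRisk fun c s hc h => e.symm_apply_le.2 ?_)
    have hcert : ∀ᵐ ω ∂μ, (a • Z) ω ≤ (a * c) * Y ω + a * s := by
      filter_upwards [hZa, h] with ω h₁ h₂
      rw [h₁, mul_assoc, ← mul_add]
      exact mul_le_mul_of_nonneg_left h₂ ha.le
    refine (majorantRisk_le (mul_pos ha hc) hcert).trans_eq ?_
    simp only [e, EReal.mulCoeOrderIso_apply]
    norm_cast
    ring
  · refine le_majorantRisk fun c s hc h => ?_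
    have hcert : ∀ᵐ ω ∂μ, Z ω ≤ (c / a) * Y ω + s / a := by
      filter_upwards [hZa, h] with ω h₁ h₂
      rw [h₁] at h₂
      rw [div_mul_eq_mul_div, ← add_div, le_div_iff₀ ha]
      linarith
    calc (a : EReal) * majorantRisk Y r Z ≤ a * ((c / a * r + s / a : ℝ) : EReal) := by
          gcongr
          exact majorantRisk_le (div_pos hc ha) hcert
      _ = ((c * r + s : ℝ) : EReal) := by
          norm_cast
          field_simp

lemma majorantRisk_add_le (hZ : majorantRisk Y r Z ≠ ⊥) (hW : majorantRisk Y r W ≠ ⊥) :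
    majorantRisk Y r (Z + W) ≤ majorantRisk Y r Z + majorantRisk Y r W := by
  refine EReal.le_add_of_forall_gt (.inl hZ) (.inr hW) fun x hx y hy => ?_
  obtain ⟨⟨c₁, s₁⟩, hx⟩ := iInf_lt_iff.1 hx
  obtain ⟨⟨hc₁, hZ₁⟩, hx⟩ := iInf_lt_iff.1 hx
  obtain ⟨⟨c₂, s₂⟩, hy⟩ := iInf_lt_iff.1 hy
  obtain ⟨⟨hc₂, hW₂⟩, hy⟩ := iInf_lt_iff.1 hy
  have hcert : ∀ᵐ ω ∂μ, (Z + W) ω ≤ (c₁ + c₂) * Y ω + (s₁ + s₂) := by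
    filter_upwards [Lp.coeFn_add Z W, hZ₁, hW₂] with ω h h₁ h₂
    rw [h, Pi.add_apply]
    linarith
  calc majorantRisk Y r (Z + W) ≤ (((c₁ + c₂) * r + (s₁ + s₂) : ℝ) : EReal) :=
        majorantRisk_le (add_pos hc₁ hc₂) hcert
    _ = ((c₁ * r + s₁ : ℝ) : EReal) + ((c₂ * r + s₂ : ℝ) : EReal) := by norm_cast; ring
    _ ≤ x + y := add_le_add hx.le hy.le

end MajorantRisk

section CoherentMajorant

variable {μ : Measure Ω} {p : ℝ≥0∞} [Fact (1 ≤ p)] {Y : Lp ℝ p μ} {r : ℝ}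

lemma lscHull_majorantRisk_mono {Z W : Lp ℝ p μ} (h : ⇑Z ≤ᵐ[μ] ⇑W) :
    lscHull (majorantRisk Y r) Z ≤ lscHull (majorantRisk Y r) W := by
  have hshift (V : Lp ℝ p μ) : ⇑V ≤ᵐ[μ] ⇑(V + (W - Z)) := by
    filter_upwards [Lp.coeFn_add V (W - Z), Lp.coeFn_sub W Z, h] with ω h₁ h₂ h₃
    rw [h₁, Pi.add_apply, h₂, Pi.sub_apply]
    linarith
  calc lscHull (majorantRisk Y r) Z
      ≤ lscHull (majorantRisk Y r ∘ Homeomorph.addRight (W - Z)) Z :=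
        lscHull_mono (fun V => majorantRisk_mono (hshift V)) Z
    _ = lscHull (majorantRisk Y r) W := by
        rw [lscHull_comp_homeomorph, Homeomorph.coe_addRight]
        exact congrArg _ (add_sub_cancel Z W)

lemma lscHull_majorantRisk_add_constLp [IsFiniteMeasure μ] (Z : Lp ℝ p μ) (a : ℝ) :
    lscHull (majorantRisk Y r) (Z + constLp μ p a) = lscHull (majorantRisk Y r) Z + a := by
  calc lscHull (majorantRisk Y r) (Z + constLp μ p a)
      = lscHull (majorantRisk Y r ∘ Homeomorph.addRight (constLp μ p a)) Z := by
        rw [lscHull_comp_homeomorph, Homeomorph.coe_addRight]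
    _ = lscHull (EReal.addCoeOrderIso a ∘ majorantRisk Y r) Z := by
        congr 1
        ext V
        exact majorantRisk_add_constLp V a
    _ = _ := lscHull_orderIso_comp _ Z

lemma lscHull_majorantRisk_smul (Z : Lp ℝ p μ) {a : ℝ} (ha : 0 < a) :
    lscHull (majorantRisk Y r) (a • Z) = a * lscHull (majorantRisk Y r) Z := by
  calc lscHull (majorantRisk Y r) (a • Z)
      = lscHull (majorantRisk Y r ∘ Homeomorph.smulOfNeZero a ha.ne') Z := by
        rw [lscHull_comp_homeomorph, Homeomorph.smulOfNeZero_apply]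
    _ = lscHull (EReal.mulCoeOrderIso a ha ∘ majorantRisk Y r) Z := by
        congr 1
        ext V
        exact majorantRisk_smul V ha
    _ = _ := lscHull_orderIso_comp _ Z

theorem exists_isCoherentRiskMeasure_ge_and_le_at [IsFiniteMeasure μ] (ρ₀ : Lp ℝ p μ → ℝ)
    (hcont : Continuous ρ₀)
    (hmono : ∀ Z W : Lp ℝ p μ, ⇑Z ≤ᵐ[μ] ⇑W → ρ₀ Z ≤ ρ₀ W)
    (hsmul_add : ∀ (Y : Lp ℝ p μ) (c s : ℝ), 0 < c → ρ₀ (c • Y + constLp μ p s) = c * ρ₀ Y + s)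
    (Y : Lp ℝ p μ) :
    ∃ ρ : Lp ℝ p μ → EReal, IsCoherentRiskMeasure μ p ρ ∧
      (∀ Z, (ρ₀ Z : EReal) ≤ ρ Z) ∧ ρ Y ≤ ρ₀ Y := by
  set m := majorantRisk Y (ρ₀ Y)
  have hle_m (Z : Lp ℝ p μ) : (ρ₀ Z : EReal) ≤ m Z :=
    le_majorantRisk fun c s hc h => EReal.coe_le_coe_iff.2 <|
      (hmono _ _ (EventuallyLE.trans h (coeFn_smul_add_constLp Y c s).symm.le)).trans
        (hsmul_add Y c s hc).le
  have hle : ∀ Z, (ρ₀ Z : EReal) ≤ lscHull m Z :=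
    (continuous_coe_real_ereal.comp hcont).lowerSemicontinuous.le_lscHull hle_m
  have hne_m (Z : Lp ℝ p μ) : m Z ≠ ⊥ := ne_bot_of_le_ne_bot (EReal.coe_ne_bot _) (hle_m Z)
  have hne (Z : Lp ℝ p μ) : lscHull m Z ≠ ⊥ := ne_bot_of_le_ne_bot (EReal.coe_ne_bot _) (hle Z)
  refine ⟨lscHull m, ⟨hne, lowerSemicontinuous_lscHull, fun c hc Z => ?_, fun c Z => ?_,
    fun Z W h => lscHull_majorantRisk_mono h, fun Z W => ?_⟩, hle,
    (lscHull_le_self Y).trans majorantRisk_self_le⟩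
  · exact lscHull_majorantRisk_smul Z hc
  · exact lscHull_majorantRisk_add_constLp Z c
  · exact lscHull_add_le (fun V V' => majorantRisk_add_le (hne_m V) (hne_m V')) (hne Z) (hne W)

end CoherentMajorant

theorem exists_isCoherentRiskMeasure_ge_distortionRisk_and_le_at {P : Measure Ω}
    [IsProbabilityMeasure P] (K : DistortionKernel) {p : ℝ≥0∞} [Fact (1 ≤ p)] (hp : p ≠ ∞)
    (hfin : ∀ X : Lp ℝ p P, IntegrableOn (fun t => VaR P (⇑X) t) (Ioc 0 1) K.toStieltjes.measure)
    (hcont : Continuous fun X : Lp ℝ p P => distortionRisk P K ⇑X) (Y : Lp ℝ p P) :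
    ∃ ρ : Lp ℝ p P → EReal, IsCoherentRiskMeasure P p ρ ∧
      (∀ Z : Lp ℝ p P, (distortionRisk P K ⇑Z : EReal) ≤ ρ Z) ∧
      ρ Y ≤ (distortionRisk P K ⇑Y : EReal) :=
  exists_isCoherentRiskMeasure_ge_and_le_at _ hcont
    (fun _ _ => distortionRisk_mono K hp hfin hcont)
    (fun Y _ s hc => distortionRisk_smul_add_constLp K hp hfin hcont Y hc s) Y

lemma restrictFn_le_restrictFn {μ : Measure Ω} {p : ℝ≥0∞} {ψ ψ' : Lp ℝ p μ → EReal}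
    {M : Set (Lp ℝ p μ)} {X : Lp ℝ p μ} (h : ψ X ≤ ψ' X) :
    restrictFn ψ M X ≤ restrictFn ψ' M X := by
  unfold restrictFn
  split_ifs
  exacts [h, le_rfl]

theorem stmt4_general (P : Measure Ω) [IsProbabilityMeasure P]
    (p : ℝ≥0∞) [Fact (1 ≤ p)] (hp : p ≠ ∞)
    (n : ℕ) (K : Fin n → DistortionKernel)
    (hfin : ∀ i (X : Lp ℝ p P),
      IntegrableOn (fun t => VaR P (⇑X) t) (Set.Ioc 0 1) (K i).toStieltjes.measure)
    (hcont : ∀ i, Continuous fun X : Lp ℝ p P => distortionRisk P (K i) ⇑X)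
    (lam : Fin n → ℝ) (hlam : ∀ i, 0 < lam i)
    (M : Fin n → Set (Lp ℝ p P))
    (X₀ : Lp ℝ p P)
    (Xs : Fin n → Lp ℝ p P)
    (hopt : ∀ ρt : Fin n → (Lp ℝ p P → EReal),
      (∀ i, IsCoherentRiskMeasure P p (ρt i)) →
      (∀ i (Z : Lp ℝ p P), ((distortionRisk P (K i) ⇑Z : ℝ) : EReal) ≤ ρt i Z) →
      ∀ Ys : Fin n → Lp ℝ p P, ∑ i, Ys i = X₀ →
        ∑ i, (lam i : EReal) * restrictFn (ρt i) (M i) (Xs i) ≤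
          ∑ i, (lam i : EReal) * restrictFn (ρt i) (M i) (Ys i)) :
    ∀ Ys : Fin n → Lp ℝ p P, ∑ i, Ys i = X₀ →
      ∑ i, (lam i : EReal) *
          restrictFn (fun Z => ((distortionRisk P (K i) ⇑Z : ℝ) : EReal)) (M i) (Xs i) ≤
        ∑ i, (lam i : EReal) *
          restrictFn (fun Z => ((distortionRisk P (K i) ⇑Z : ℝ) : EReal)) (M i) (Ys i) := by
  intro Ys hYs
  choose ρ hρ hρ_ge hρ_le using fun i =>
    exists_isCoherentRiskMeasure_ge_distortionRisk_and_le_at (K i) hp (hfin i) (hcont i) (Ys i)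
  have hlam' (i : Fin n) : (0 : EReal) ≤ lam i := EReal.coe_nonneg.2 (hlam i).le
  calc _ ≤ ∑ i, (lam i : EReal) * restrictFn (ρ i) (M i) (Xs i) :=
        Finset.sum_le_sum fun i _ =>
          mul_le_mul_of_nonneg_left (restrictFn_le_restrictFn (hρ_ge i _)) (hlam' i)
    _ ≤ ∑ i, (lam i : EReal) * restrictFn (ρ i) (M i) (Ys i) := hopt ρ hρ hρ_ge Ys hYs
    _ ≤ _ := Finset.sum_le_sum fun i _ =>
          mul_le_mul_of_nonneg_left (restrictFn_le_restrictFn (hρ_le i)) (hlam' i)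

theorem stmt4 (P : Measure Ω) [IsProbabilityMeasure P]
    (p : ℝ≥0∞) [Fact (1 ≤ p)] (hp : p ≠ ∞)
    (n : ℕ) (K : Fin n → DistortionKernel)
    (hfin : ∀ i (X : Lp ℝ p P),
      IntegrableOn (fun t => VaR P (⇑X) t) (Set.Ioc 0 1) (K i).toStieltjes.measure)
    (hcont : ∀ i, Continuous fun X : Lp ℝ p P => distortionRisk P (K i) ⇑X)
    (lam : Fin n → ℝ) (hlam : ∀ i, 0 < lam i)
    (M : Fin n → Set (Lp ℝ p P))
    (hMclosed : ∀ i, IsClosed (M i)) (hMconvex : ∀ i, Convex ℝ (M i))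
    (hMcone : ∀ i (c : ℝ), 0 < c → ∀ X ∈ M i, c • X ∈ M i)
    (X₀ : Lp ℝ p P) (mlb : ℝ) (hbd : ∀ᵐ ω ∂P, mlb ≤ X₀ ω)
    (Xs : Fin n → Lp ℝ p P) (hXs : ∑ i, Xs i = X₀)
    (hopt : ∀ ρt : Fin n → (Lp ℝ p P → EReal),
      (∀ i, IsCoherentRiskMeasure P p (ρt i)) →
      (∀ i (Z : Lp ℝ p P), ((distortionRisk P (K i) ⇑Z : ℝ) : EReal) ≤ ρt i Z) →
      ∀ Ys : Fin n → Lp ℝ p P, ∑ i, Ys i = X₀ →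
        ∑ i, (lam i : EReal) * restrictFn (ρt i) (M i) (Xs i) ≤
          ∑ i, (lam i : EReal) * restrictFn (ρt i) (M i) (Ys i)) :
    ∀ Ys : Fin n → Lp ℝ p P, ∑ i, Ys i = X₀ →
      ∑ i, (lam i : EReal) *
          restrictFn (fun Z => ((distortionRisk P (K i) ⇑Z : ℝ) : EReal)) (M i) (Xs i) ≤
        ∑ i, (lam i : EReal) *
          restrictFn (fun Z => ((distortionRisk P (K i) ⇑Z : ℝ) : EReal)) (M i) (Ys i) :=
  stmt4_general P p hp n K hfin hcont lam hlam M X₀ Xs hopt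

end
end

section
/- (Boundedness is independent of the total risk.) Let ρ₁, …, ρₙ be distortion risk measures that are finite and norm-continuous on Lᵖ (p ∈ [1, ∞)) and let λ₁, …, λₙ > 0. If inf{Σᵢ λᵢ ρᵢ(Xᵢ) : X₁ + ⋯ + Xₙ = X₀} > −∞ for some X₀ ∈ Lᵖ that is bounded below, then inf{Σᵢ λᵢ ρᵢ(Xᵢ) : X₁ + ⋯ + Xₙ = X₀′} > −∞ for every X₀′ ∈ Lᵖ that is bounded below. -/
/-!
Each `ρ_K` is positively homogeneous, and continuity on `Lᵖ` (`p < ∞`) makes it monotone and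
cash-additive as well: both properties hold for variables bounded above and pass to all of `Lᵖ`
along the truncations `X ⊓ k → X`. They need the truncation because `VaR` at `t = 1` is
`sInf ∅ = 0` for a variable that is not bounded above.

Write `F (X₁, …, Xₙ) = ∑ λᵢ ρᵢ(Xᵢ)`. If `d` is an allocation of `X₀` and `U` sums to zero, then
`F U = lim_{ε → 0⁺} F (U + ε d) = lim_{ε → 0⁺} ε F (d + ε⁻¹ U)`, so a lower bound for `F` on the
allocations of `X₀` forces `F ≥ 0` on zero-sum allocations. An allocation of `X₀' ≥ m'` has the
form `Uᵢ + X₀' / n` with `U` summing to zero, and monotonicity with cash-additivity give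
`F ≥ F U + (m' / n) ∑ λᵢ ≥ (m' / n) ∑ λᵢ`.
-/

open MeasureTheory Filter
open scoped ENNReal Pointwise Classical

noncomputable section

variable {Ω : Type*} [MeasurableSpace Ω]


open scoped Topology

section VaR

variable {P : Measure Ω} {X Y : Ω → ℝ} {t : ℝ}

lemma VaR_congr_ae (h : X =ᵐ[P] Y) (t : ℝ) : VaR P X t = VaR P Y t := by
  have hset (x : ℝ) : P {ω | x < X ω} = P {ω | x < Y ω} :=
    measure_congr <| h.mono fun ω hω => show (x < X ω) = (x < Y ω) by rw [hω]
  simp only [VaR, hset]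

lemma bddBelow_setOf_measure_lt_le [IsProbabilityMeasure P] (X : Ω → ℝ) (ht : 0 < t) :
    BddBelow {x : ℝ | P {ω | x < X ω} ≤ ENNReal.ofReal (1 - t)} := by
  have hlim : Tendsto (fun x : ℝ => P {ω | -x < X ω}) atTop (𝓝 1) := by
    have hunion : ⋃ x : ℝ, {ω | -x < X ω} = Set.univ :=
      Set.eq_univ_of_forall fun ω => Set.mem_iUnion.2 ⟨-X ω + 1, by simp⟩
    simpa [hunion, Function.comp_def] using tendsto_measure_iUnion_atTop (μ := P)
      (s := fun x : ℝ => {ω | -x < X ω}) fun a b hab ω hω => by simp at *; linarith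
  obtain ⟨x, hx⟩ :=
    (hlim.eventually_const_lt (ENNReal.ofReal_lt_one.2 (by linarith : 1 - t < 1))).exists
  refine ⟨-x, fun y hy => ?_⟩
  by_contra! hyx
  exact (hx.trans_le (measure_mono fun ω hω => hyx.trans hω)).not_ge hy

lemma mem_setOf_measure_lt_le_of_ae_le {M : ℝ} (hM : ∀ᵐ ω ∂P, X ω ≤ M) (t : ℝ) :
    M ∈ {x : ℝ | P {ω | x < X ω} ≤ ENNReal.ofReal (1 - t)} := by
  have : P {ω | M < X ω} = 0 := by simpa using ae_iff.1 hM
  simp [this]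

lemma VaR_mono_of_ae_le_s7 [IsProbabilityMeasure P] {M : ℝ} (hXY : X ≤ᵐ[P] Y)
    (hY : ∀ᵐ ω ∂P, Y ω ≤ M) (ht : 0 < t) :
    VaR P X t ≤ VaR P Y t :=
  csInf_le_csInf (bddBelow_setOf_measure_lt_le X ht) ⟨M, mem_setOf_measure_lt_le_of_ae_le hY t⟩
    fun _ hx => (measure_mono_ae <| hXY.mono fun _ h hlt => hlt.trans_le h).trans hx

lemma VaR_add_const [IsProbabilityMeasure P] {M : ℝ} (hX : ∀ᵐ ω ∂P, X ω ≤ M) (ht : 0 < t)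
    (c : ℝ) :
    VaR P (fun ω => X ω + c) t = VaR P X t + c := by
  have hset : {x : ℝ | P {ω | x < X ω + c} ≤ ENNReal.ofReal (1 - t)} =
      OrderIso.addRight c '' {x : ℝ | P {ω | x < X ω} ≤ ENNReal.ofReal (1 - t)} := by
    ext x
    simp [Set.image_add_right, ← sub_eq_add_neg, sub_lt_iff_lt_add]
  rw [VaR, hset, ← (OrderIso.addRight c).map_csInf' ⟨M, mem_setOf_measure_lt_le_of_ae_le hX t⟩
    (bddBelow_setOf_measure_lt_le X ht)]
  rfl

lemma VaR_const_mul (X : Ω → ℝ) {c : ℝ} (hc : 0 < c) (t : ℝ) :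
    VaR P (fun ω => c * X ω) t = c * VaR P X t := by
  have hset : {x : ℝ | P {ω | x < c * X ω} ≤ ENNReal.ofReal (1 - t)} =
      c • {x : ℝ | P {ω | x < X ω} ≤ ENNReal.ofReal (1 - t)} := by
    ext x
    simp [Set.mem_smul_set_iff_inv_smul_mem₀ hc.ne', inv_mul_lt_iff₀ hc]
  rw [VaR, hset, Real.sInf_smul_of_nonneg hc.le]
  rfl

end VaR

section DistortionRisk

variable {P : Measure Ω} (K : DistortionKernel) {X Y : Ω → ℝ}

lemma DistortionKernel.measure_Ioc : K.toStieltjes.measure (Set.Ioc 0 1) = 1 := by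
  simp [StieltjesFunction.measure_Ioc, K.one_of_one_le 1 le_rfl, K.zero_of_nonpos 0 le_rfl]

lemma distortionRisk_congr_ae (h : X =ᵐ[P] Y) : distortionRisk P K X = distortionRisk P K Y := by
  simp only [distortionRisk, VaR_congr_ae h]

lemma distortionRisk_const_mul (X : Ω → ℝ) {c : ℝ} (hc : 0 < c) :
    distortionRisk P K (fun ω => c * X ω) = c * distortionRisk P K X := by
  simp only [distortionRisk, VaR_const_mul X hc, integral_const_mul]

lemma distortionRisk_smul {p : ℝ≥0∞} (X : Lp ℝ p P) {c : ℝ} (hc : 0 < c) :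
    distortionRisk P K ⇑(c • X) = c * distortionRisk P K X := by
  rw [distortionRisk_congr_ae K (Lp.coeFn_smul c X), ← distortionRisk_const_mul K X hc]
  rfl

variable [IsProbabilityMeasure P] {M : ℝ}

lemma distortionRisk_mono_of_ae_le_s7
    (hXi : IntegrableOn (VaR P X) (Set.Ioc 0 1) K.toStieltjes.measure)
    (hYi : IntegrableOn (VaR P Y) (Set.Ioc 0 1) K.toStieltjes.measure)
    (hXY : X ≤ᵐ[P] Y) (hY : ∀ᵐ ω ∂P, Y ω ≤ M) :
    distortionRisk P K X ≤ distortionRisk P K Y :=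
  setIntegral_mono_on hXi hYi measurableSet_Ioc fun _ ht => VaR_mono_of_ae_le_s7 hXY hY ht.1

lemma distortionRisk_add_const_of_ae_le
    (hXi : IntegrableOn (VaR P X) (Set.Ioc 0 1) K.toStieltjes.measure)
    (hX : ∀ᵐ ω ∂P, X ω ≤ M) (c : ℝ) :
    distortionRisk P K (fun ω => X ω + c) = distortionRisk P K X + c := by
  have hc : IntegrableOn (fun _ => c) (Set.Ioc 0 1) K.toStieltjes.measure :=
    integrableOn_const (by simp [K.measure_Ioc])
  rw [distortionRisk, setIntegral_congr_fun measurableSet_Ioc fun _ ht => VaR_add_const hX ht.1 c,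
    integral_add hXi hc, setIntegral_const, measureReal_def, K.measure_Ioc]
  simp [distortionRisk]

end DistortionRisk

lemma unifIntegrable_of_ae_norm_le {α ι : Type*} [MeasurableSpace α] {μ : Measure α}
    {p : ℝ≥0∞} (hp : 1 ≤ p) (hp' : p ≠ ∞) {f : ι → α → ℝ} {g : α → ℝ} (hg : MemLp g p μ)
    (hfg : ∀ i, ∀ᵐ x ∂μ, ‖f i x‖ ≤ ‖g x‖) : UnifIntegrable f p μ := by
  intro ε hε
  obtain ⟨δ, hδ, hg'⟩ := unifIntegrable_const (ι := Unit) hp hp' hg hε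
  refine ⟨δ, hδ, fun i s hs hμs => (eLpNorm_mono_ae ?_).trans (hg' () s hs hμs)⟩
  filter_upwards [hfg i] with x hx
  simp only [norm_indicator_eq_indicator_norm]
  exact Set.indicator_le_indicator hx

namespace MeasureTheory.Lp

variable {P : Measure Ω} [IsFiniteMeasure P] {p : ℝ≥0∞}

lemma coeFn_inf_const (X : Lp ℝ p P) (c : ℝ) :
    ⇑(X ⊓ Lp.const p P c) =ᵐ[P] fun ω => min (X ω) c := by
  filter_upwards [coeFn_inf X (Lp.const p P c), coeFn_const p P c] with ω h1 h2
  rw [h1, Pi.inf_apply, h2]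
  rfl

lemma tendsto_inf_natCast [Fact (1 ≤ p)] (hp : p ≠ ∞) (X : Lp ℝ p P) :
    Tendsto (fun k : ℕ => X ⊓ Lp.const p P (k : ℝ)) atTop (𝓝 X) := by
  rw [tendsto_Lp_iff_tendsto_eLpNorm']
  have hdom (k : ℕ) : ∀ᵐ ω ∂P, ‖(X ⊓ Lp.const p P (k : ℝ)) ω‖ ≤ ‖X ω‖ := by
    filter_upwards [coeFn_inf_const X k] with ω hω
    rw [hω]
    rcases le_total (X ω) k with h | h
    · rw [min_eq_left h]
    · rw [min_eq_right h, Real.norm_natCast, Real.norm_eq_abs]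
      exact h.trans (le_abs_self _)
  refine tendsto_Lp_finite_of_tendsto_ae Fact.out hp (fun _ => Lp.aestronglyMeasurable _)
    (Lp.memLp X) (unifIntegrable_of_ae_norm_le Fact.out hp (Lp.memLp X) hdom) ?_
  filter_upwards [ae_all_iff.2 fun k : ℕ => coeFn_inf_const X k] with ω hω
  refine tendsto_atTop_of_eventually_const (i₀ := ⌈X ω⌉₊) fun k hk => ?_
  rw [hω, min_eq_left (Nat.ceil_le.1 hk)]

end MeasureTheory.Lp

section LpRisk

variable {P : Measure Ω} [IsProbabilityMeasure P] {p : ℝ≥0∞} [Fact (1 ≤ p)] {K : DistortionKernel}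
  (hp : p ≠ ∞)
  (hfin : ∀ X : Lp ℝ p P, IntegrableOn (VaR P X) (Set.Ioc 0 1) K.toStieltjes.measure)
  (hcont : Continuous fun X : Lp ℝ p P => distortionRisk P K X)
include hp hfin hcont

lemma distortionRisk_monotone : Monotone fun X : Lp ℝ p P => distortionRisk P K X := by
  intro X Y hXY
  have hk (k : ℕ) : distortionRisk P K ⇑(X ⊓ Lp.const p P (k : ℝ)) ≤
      distortionRisk P K ⇑(Y ⊓ Lp.const p P (k : ℝ)) := by
    refine distortionRisk_mono_of_ae_le_s7 K (hfin _) (hfin _)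
      ((Lp.coeFn_le _ _).2 (inf_le_inf_right _ hXY)) (M := k) ?_
    filter_upwards [Lp.coeFn_inf_const Y k] with ω hω
    simp [hω]
  exact le_of_tendsto_of_tendsto' ((hcont.tendsto X).comp (Lp.tendsto_inf_natCast hp X))
    ((hcont.tendsto Y).comp (Lp.tendsto_inf_natCast hp Y)) hk

lemma distortionRisk_add_const (X : Lp ℝ p P) (c : ℝ) :
    distortionRisk P K ⇑(X + Lp.const p P c) = distortionRisk P K X + c := by
  have hk (k : ℕ) : distortionRisk P K ⇑(X ⊓ Lp.const p P (k : ℝ) + Lp.const p P c) =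
      distortionRisk P K ⇑(X ⊓ Lp.const p P (k : ℝ)) + c := by
    have hbdd : ∀ᵐ ω ∂P, (X ⊓ Lp.const p P (k : ℝ)) ω ≤ k := by
      filter_upwards [Lp.coeFn_inf_const X k] with ω hω
      simp [hω]
    rw [← distortionRisk_add_const_of_ae_le K (hfin _) hbdd c]
    refine distortionRisk_congr_ae K ?_
    filter_upwards [Lp.coeFn_add (X ⊓ Lp.const p P (k : ℝ)) (Lp.const p P c),
      Lp.coeFn_const p P c] with ω h1 h2
    rw [h1, Pi.add_apply, h2, Function.const_apply]
  have htend := Lp.tendsto_inf_natCast hp X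
  refine tendsto_nhds_unique ((hcont.tendsto _).comp (htend.add_const (Lp.const p P c))) ?_
  simp_rw [Function.comp_def, hk]
  exact ((hcont.tendsto X).comp htend).add_const c

lemma distortionRisk_sub_smul_add_le {X : Lp ℝ p P} {m : ℝ} (hX : ∀ᵐ ω ∂P, m ≤ X ω)
    (Z : Lp ℝ p P) {c : ℝ} (hc : 0 ≤ c) :
    distortionRisk P K ⇑(Z - c • X) + c * m ≤ distortionRisk P K Z := by
  rw [← distortionRisk_add_const hp hfin hcont]
  refine distortionRisk_monotone hp hfin hcont ((Lp.coeFn_le _ _).1 ?_)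
  filter_upwards [Lp.coeFn_add (Z - c • X) (Lp.const p P (c * m)), Lp.coeFn_sub Z (c • X),
    Lp.coeFn_smul c X, Lp.coeFn_const p P (c * m), hX] with ω h1 h2 h3 h4 h5
  rw [h1, Pi.add_apply, h2, Pi.sub_apply, h3, h4, Pi.smul_apply, Function.const_apply,
    smul_eq_mul]
  linarith [mul_le_mul_of_nonneg_left h5 hc]

end LpRisk

lemma nonneg_of_forall_le_add_smul {E : Type*} [AddCommGroup E] [Module ℝ E] [TopologicalSpace E]
    [ContinuousAdd E] [ContinuousSMul ℝ E] {F : E → ℝ} (hF : Continuous F)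
    (hhom : ∀ c : ℝ, 0 < c → ∀ x, F (c • x) = c * F x) {d u : E} {B : ℝ}
    (hB : ∀ c : ℝ, 0 < c → B ≤ F (d + c • u)) : 0 ≤ F u := by
  have hlim : Tendsto (fun ε : ℝ => F (u + ε • d)) (𝓝[>] 0) (𝓝 (F u)) := by
    have : Tendsto (fun ε : ℝ => u + ε • d) (𝓝 0) (𝓝 u) :=
      Continuous.tendsto' (by fun_prop) 0 u (by simp)
    exact (hF.tendsto u).comp (this.mono_left nhdsWithin_le_nhds)
  have hbound : ∀ᶠ ε in 𝓝[>] (0 : ℝ), ε * B ≤ F (u + ε • d) := by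
    filter_upwards [self_mem_nhdsWithin] with ε (hε : 0 < ε)
    calc ε * B ≤ ε * F (d + ε⁻¹ • u) := mul_le_mul_of_nonneg_left (hB _ (inv_pos.2 hε)) hε.le
      _ = F (u + ε • d) := by
        rw [← hhom ε hε, smul_add, smul_inv_smul₀ hε.ne', add_comm]
  have hzero : Tendsto (fun ε : ℝ => ε * B) (𝓝[>] 0) (𝓝 0) := by
    simpa using (tendsto_id.mul_const B).mono_left (nhdsWithin_le_nhds (a := (0 : ℝ)))
  exact le_of_tendsto_of_tendsto hzero hlim hbound

lemma Finset.sum_sub_inv_smul_eq_zero {E : Type*} [AddCommGroup E] [Module ℝ E] {n : ℕ}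
    (hn : n ≠ 0) {Xs : Fin n → E} {X : E} (hX : ∑ i, Xs i = X) :
    ∑ i, (Xs i - (n : ℝ)⁻¹ • X) = 0 := by
  simp [Finset.sum_sub_distrib, hX, ← Nat.cast_smul_eq_nsmul ℝ, smul_smul,
    mul_inv_cancel₀ (Nat.cast_ne_zero.2 hn : (n : ℝ) ≠ 0)]

theorem stmt7_general (P : Measure Ω) [IsProbabilityMeasure P]
    (p : ℝ≥0∞) [Fact (1 ≤ p)] (hp : p ≠ ∞)
    (n : ℕ) (K : Fin n → DistortionKernel)
    (hfin : ∀ i (X : Lp ℝ p P),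
      IntegrableOn (fun t => VaR P (⇑X) t) (Set.Ioc 0 1) (K i).toStieltjes.measure)
    (hcont : ∀ i, Continuous fun X : Lp ℝ p P => distortionRisk P (K i) ⇑X)
    (lam : Fin n → ℝ) (hlam : ∀ i, 0 < lam i)
    (X₀ : Lp ℝ p P)
    (hbdd : BddBelow {r : ℝ | ∃ Xs : Fin n → Lp ℝ p P, ∑ i, Xs i = X₀ ∧
        r = ∑ i, lam i * distortionRisk P (K i) ⇑(Xs i)}) :
    ∀ (X₀' : Lp ℝ p P) (m' : ℝ), (∀ᵐ ω ∂P, m' ≤ X₀' ω) →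
      BddBelow {r : ℝ | ∃ Xs : Fin n → Lp ℝ p P, ∑ i, Xs i = X₀' ∧
        r = ∑ i, lam i * distortionRisk P (K i) ⇑(Xs i)} := by
  intro X₀' m' hm'
  rcases isEmpty_or_nonempty (Fin n) with _ | ⟨⟨i₀⟩⟩
  · exact ⟨0, by rintro _ ⟨Xs, -, rfl⟩; simp⟩
  obtain ⟨B, hB⟩ := hbdd
  set F : (Fin n → Lp ℝ p P) → ℝ := fun Xs => ∑ i, lam i * distortionRisk P (K i) ⇑(Xs i)
  have hF_nonneg (U : Fin n → Lp ℝ p P) (hU : ∑ i, U i = 0) : 0 ≤ F U := by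
    refine nonneg_of_forall_le_add_smul (F := F) (d := Pi.single i₀ X₀) (B := B)
      (continuous_finsetSum _ fun i _ => continuous_const.mul ((hcont i).comp (continuous_apply i)))
      (fun c hc Xs => ?_) fun c _ => hB ⟨_, ?_, rfl⟩
    · simp only [F, Pi.smul_apply, distortionRisk_smul _ _ hc, Finset.mul_sum]
      exact Finset.sum_congr rfl fun i _ => by ring
    · simp [Finset.sum_add_distrib, ← Finset.smul_sum, hU]
  refine ⟨(n : ℝ)⁻¹ * m' * ∑ i, lam i, ?_⟩
  rintro _ ⟨Xs, hsum, rfl⟩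
  set U : Fin n → Lp ℝ p P := fun i => Xs i - (n : ℝ)⁻¹ • X₀'
  have hU : ∑ i, U i = 0 := Finset.sum_sub_inv_smul_eq_zero (Fin.pos i₀).ne' hsum
  calc (n : ℝ)⁻¹ * m' * ∑ i, lam i ≤ F U + (n : ℝ)⁻¹ * m' * ∑ i, lam i :=
        le_add_of_nonneg_left (hF_nonneg U hU)
    _ = ∑ i, lam i * (distortionRisk P (K i) ⇑(U i) + (n : ℝ)⁻¹ * m') := by
        simp only [F, mul_add, Finset.sum_add_distrib, Finset.mul_sum]
        exact congrArg _ (Finset.sum_congr rfl fun i _ => by ring)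
    _ ≤ ∑ i, lam i * distortionRisk P (K i) ⇑(Xs i) :=
        Finset.sum_le_sum fun i _ => mul_le_mul_of_nonneg_left
          (distortionRisk_sub_smul_add_le hp (hfin i) (hcont i) hm' _ (by positivity)) (hlam i).le

theorem stmt7 (P : Measure Ω) [IsProbabilityMeasure P]
    (p : ℝ≥0∞) [Fact (1 ≤ p)] (hp : p ≠ ∞)
    (n : ℕ) (K : Fin n → DistortionKernel)
    (hfin : ∀ i (X : Lp ℝ p P),
      IntegrableOn (fun t => VaR P (⇑X) t) (Set.Ioc 0 1) (K i).toStieltjes.measure)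
    (hcont : ∀ i, Continuous fun X : Lp ℝ p P => distortionRisk P (K i) ⇑X)
    (lam : Fin n → ℝ) (hlam : ∀ i, 0 < lam i)
    (X₀ : Lp ℝ p P) (m₀ : ℝ) (hbd₀ : ∀ᵐ ω ∂P, m₀ ≤ X₀ ω)
    (hbdd : BddBelow {r : ℝ | ∃ Xs : Fin n → Lp ℝ p P, ∑ i, Xs i = X₀ ∧
        r = ∑ i, lam i * distortionRisk P (K i) ⇑(Xs i)}) :
    ∀ (X₀' : Lp ℝ p P) (m' : ℝ), (∀ᵐ ω ∂P, m' ≤ X₀' ω) →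
      BddBelow {r : ℝ | ∃ Xs : Fin n → Lp ℝ p P, ∑ i, Xs i = X₀' ∧
        r = ∑ i, lam i * distortionRisk P (K i) ⇑(Xs i)} :=
  stmt7_general P p hp n K hfin hcont lam hlam X₀ hbdd

end
end

section
/- Let Φ be a distortion kernel with associated distortion risk measure ρ_Φ, let X₀ be a bounded random variable with X₀ ≥ 0 a.s., and let f : ℝ₊ → ℝ₊ be given by f(x) = ∫₀ˣ h(t) dt for a measurable function h : ℝ₊ → [0, 1]. Then ρ_Φ(f(X₀)) = ∫₀^∞ (1 − Φ(F_{X₀}(s))) h(s) ds. -/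
open MeasureTheory Filter
open scoped ENNReal Pointwise Classical

noncomputable section

variable {Ω : Type*} [MeasurableSpace Ω]


/-- The distortion risk measure of a nonnegative risk, with values in `[0, +∞]`. -/
def distortionRiskE (P : Measure Ω) (K : DistortionKernel) (X : Ω → ℝ) : ℝ≥0∞ :=
  ∫⁻ t in Set.Ioc (0 : ℝ) 1, ENNReal.ofReal (VaR P X t) ∂K.toStieltjes.measure


/-! `VaR_t` is the lower quantile of `X₀`: for `t ∈ (0, 1]`, `VaR_t(X₀) ≤ u ↔ t ≤ F_{X₀}(u)`,
and a continuous nondecreasing `f` commutes with it, so `ρ_Φ(f(X₀)) = ∫₀¹ f(VaR_t(X₀)) dΦ(t)`.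
Since `f(v) = ∫₀^v h`, the layer cake formula rewrites this as
`∫₀^∞ dΦ{t ∈ (0, 1] | s < VaR_t(X₀)} h(s) ds`, and that set of levels is `(F_{X₀}(s), 1]`. -/

theorem StieltjesFunction.csInf_setOf_le_le_iff (F : StieltjesFunction ℝ) {t u : ℝ}
    (hbdd : BddBelow {x | t ≤ F x}) (hne : {x | t ≤ F x}.Nonempty) :
    sInf {x | t ≤ F x} ≤ u ↔ t ≤ F u := by
  refine ⟨fun hu => ?_, fun hu => csInf_le hbdd hu⟩
  set a := sInf {x | t ≤ F x}
  -- right continuity closes the upper set `{x | t ≤ F x}` at its infimum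
  have ha : t ≤ F a := by
    refine ge_of_tendsto ((F.right_continuous a).mono Set.Ioi_subset_Ici_self)
      (eventually_nhdsWithin_of_forall fun x hx => ?_)
    obtain ⟨s, hs, hsx⟩ := exists_lt_of_csInf_lt hne hx
    exact hs.trans (F.mono hsx.le)
  exact ha.trans (F.mono hu)

section VaR

variable {P : Measure Ω} {X Y : Ω → ℝ} {t u x y : ℝ}

theorem cdf_le_cdf_of_forall [IsFiniteMeasure P] (hXY : ∀ ω, X ω ≤ x → Y ω ≤ y) :
    cdf P X x ≤ cdf P Y y :=
  ENNReal.toReal_mono (measure_ne_top P _) (measure_mono fun ω => hXY ω)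

theorem monotone_cdf [IsFiniteMeasure P] : Monotone (cdf P X) :=
  fun _ _ hxy => cdf_le_cdf_of_forall fun _ hω => hω.trans hxy

variable [IsProbabilityMeasure P]

theorem cdf_eq_cdf_map (hX : Measurable X) : cdf P X = ProbabilityTheory.cdf (P.map X) := by
  have := Measure.isProbabilityMeasure_map (μ := P) hX.aemeasurable
  ext x
  rw [ProbabilityTheory.cdf_eq_real, measureReal_def, Measure.map_apply hX measurableSet_Iic]
  rfl

theorem measure_lt_le_ofReal_iff (hX : Measurable X) (ht : t ≤ 1) :
    P {ω | x < X ω} ≤ ENNReal.ofReal (1 - t) ↔ t ≤ cdf P X x := by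
  have hcompl : P.real {ω | x < X ω} = 1 - cdf P X x := by
    rw [cdf, ← measureReal_def, ← probReal_compl_eq_one_sub (measurableSet_le hX measurable_const)]
    congr 1
    ext ω
    simp
  rw [← ENNReal.ofReal_toReal (measure_ne_top P _), ENNReal.ofReal_le_ofReal_iff (by linarith),
    ← measureReal_def, hcompl]
  constructor <;> intro <;> linarith

theorem VaR_le_iff (hX : Measurable X) {M : ℝ} (hM : ∀ᵐ ω ∂P, X ω ≤ M)
    (ht : t ∈ Set.Ioc 0 1) : VaR P X t ≤ u ↔ t ≤ cdf P X u := by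
  have hVaR : VaR P X t = sInf {x | t ≤ ProbabilityTheory.cdf (P.map X) x} := by
    simp_rw [VaR, measure_lt_le_ofReal_iff hX ht.2, cdf_eq_cdf_map hX]
  have htM : t ≤ ProbabilityTheory.cdf (P.map X) M := by
    rw [← cdf_eq_cdf_map hX, cdf, measure_congr (ae_eq_univ.2 hM)]
    simpa using ht.2
  obtain ⟨a, ha⟩ := Filter.eventually_atBot.1
    ((ProbabilityTheory.tendsto_cdf_atBot (P.map X)).eventually (gt_mem_nhds ht.1))
  have hbdd : BddBelow {x | t ≤ ProbabilityTheory.cdf (P.map X) x} :=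
    ⟨a, fun x hx => le_of_not_ge fun hxa => (ha x hxa).not_ge hx⟩
  rw [hVaR, StieltjesFunction.csInf_setOf_le_le_iff _ hbdd ⟨M, htM⟩, cdf_eq_cdf_map hX]

section Bounded

variable {M : ℝ} (hX : Measurable X) (hM : ∀ᵐ ω ∂P, X ω ≤ M)
include hX hM

theorem VaR_nonneg (h0 : ∀ᵐ ω ∂P, 0 ≤ X ω) (ht : t ∈ Set.Ioc 0 1) : 0 ≤ VaR P X t := by
  by_contra! hneg
  have hnull : P {ω | X ω ≤ VaR P X t} = 0 :=
    measure_mono_null (fun ω (hω : X ω ≤ _) => (hω.trans_lt hneg).not_ge) (ae_iff.1 h0)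
  have := (VaR_le_iff hX hM ht).1 le_rfl
  rw [cdf, hnull, ENNReal.toReal_zero] at this
  linarith [ht.1]

theorem monotoneOn_VaR : MonotoneOn (VaR P X) (Set.Ioc 0 1) :=
  fun _ hs _ ht hst => (VaR_le_iff hX hM hs).2 <| hst.trans <| (VaR_le_iff hX hM ht).1 le_rfl

theorem setOf_lt_VaR_inter_Ioc (u : ℝ) :
    {t | u < VaR P X t} ∩ Set.Ioc 0 1 = Set.Ioc (cdf P X u) 1 := by
  ext t
  simp only [Set.mem_inter_iff, Set.mem_Ioc]
  constructor
  · rintro ⟨hu, ht⟩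
    exact ⟨lt_of_not_ge fun h => hu.not_ge ((VaR_le_iff hX hM ht).2 h), ht.2⟩
  · rintro ⟨hu, ht1⟩
    have ht : t ∈ Set.Ioc 0 1 := ⟨(ENNReal.toReal_nonneg).trans_lt hu, ht1⟩
    exact ⟨lt_of_not_ge fun h => hu.not_ge ((VaR_le_iff hX hM ht).1 h), ht⟩

theorem VaR_comp {f : ℝ → ℝ} (hf : Monotone f) (hfc : Continuous f) (ht : t ∈ Set.Ioc 0 1) :
    VaR P (fun ω => f (X ω)) t = f (VaR P X t) := by
  set q := VaR P X t
  have hfX : ∀ᵐ ω ∂P, f (X ω) ≤ f M := hM.mono fun ω hω => hf hω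
  suffices key : ∀ y, t ≤ cdf P (fun ω => f (X ω)) y ↔ f q ≤ y by
    refine le_antisymm ((VaR_le_iff (hfc.measurable.comp hX) hfX ht).2 ((key _).2 le_rfl)) ?_
    exact (key _).1 ((VaR_le_iff (hfc.measurable.comp hX) hfX ht).1 le_rfl)
  intro y
  refine ⟨fun hy => le_of_not_gt fun hyq => ?_, fun hy => ?_⟩
  · obtain ⟨z, hyz, hzq⟩ : ∃ z, y < f z ∧ z < q :=
      (((hfc.continuousAt.eventually (lt_mem_nhds hyq)).filter_mono nhdsWithin_le_nhds).and
        (self_mem_nhdsWithin (s := Set.Iio q))).exists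
    have hz : t ≤ cdf P X z :=
      hy.trans (cdf_le_cdf_of_forall fun ω hω => (hf.reflect_lt (hω.trans_lt hyz)).le)
    exact hzq.not_ge ((VaR_le_iff hX hM ht).2 hz)
  · exact ((VaR_le_iff hX hM ht).1 le_rfl).trans
      (cdf_le_cdf_of_forall fun ω hω => (hf hω).trans hy)

end Bounded

end VaR

theorem monotone_intervalIntegral_of_nonneg {h : ℝ → ℝ}
    (hint : ∀ a b, IntervalIntegrable h volume a b) (h0 : ∀ t, 0 ≤ h t) (a : ℝ) :
    Monotone fun x => ∫ t in a..x, h t := fun x y hxy =>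
  sub_nonneg.1 <| (intervalIntegral.integral_interval_sub_left (hint a y) (hint a x)).symm ▸
    intervalIntegral.integral_nonneg hxy fun u _ => h0 u

theorem DistortionKernel.le_one (K : DistortionKernel) (x : ℝ) : K.toStieltjes x ≤ 1 := by
  rcases le_total x 1 with hx | hx
  · exact (K.toStieltjes.mono hx).trans_eq (K.one_of_one_le 1 le_rfl)
  · exact (K.one_of_one_le x hx).le

theorem stmt16 (P : Measure Ω) [IsProbabilityMeasure P] (K : DistortionKernel)
    (X₀ : Ω → ℝ) (hmeas : Measurable X₀) (h0 : ∀ᵐ ω ∂P, 0 ≤ X₀ ω)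
    (Mb : ℝ) (hMb : ∀ᵐ ω ∂P, X₀ ω ≤ Mb)
    (h : ℝ → ℝ) (hh : Measurable h) (hh0 : ∀ t, 0 ≤ h t) (hh1 : ∀ t, h t ≤ 1)
    (f : ℝ → ℝ) (hf : ∀ x, f x = ∫ t in (0 : ℝ)..x, h t) :
    distortionRisk P K (fun ω => f (X₀ ω)) =
      ∫ s in Set.Ioi (0 : ℝ), (1 - K.toStieltjes (cdf P X₀ s)) * h s := by
  have hint : ∀ a b, IntervalIntegrable h volume a b := fun a b =>
    (intervalIntegrable_const (c := (1 : ℝ))).mono_fun hh.aestronglyMeasurable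
      (ae_of_all _ fun t => by simp [abs_of_nonneg (hh0 t), hh1 t])
  obtain rfl : f = fun x => ∫ t in (0 : ℝ)..x, h t := funext hf
  have hf_mono := monotone_intervalIntegral_of_nonneg hint hh0 0
  have hf_cont := intervalIntegral.continuous_primitive hint 0
  rw [distortionRisk, setIntegral_congr_fun measurableSet_Ioc fun t ht =>
    VaR_comp hmeas hMb hf_mono hf_cont ht]
  set Φ := K.toStieltjes
  have hq_nonneg : ∀ᵐ t ∂Φ.measure.restrict (Set.Ioc 0 1), 0 ≤ VaR P X₀ t :=
    ae_restrict_of_forall_mem measurableSet_Ioc fun t ht => VaR_nonneg hmeas hMb h0 ht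
  have hq_meas : AEMeasurable (VaR P X₀) (Φ.measure.restrict (Set.Ioc 0 1)) :=
    aemeasurable_restrict_of_monotoneOn measurableSet_Ioc (monotoneOn_VaR hmeas hMb)
  rw [integral_eq_lintegral_of_nonneg_ae (f := fun t => ∫ u in (0 : ℝ)..VaR P X₀ t, h u)
      (hq_nonneg.mono fun t ht => by simpa using hf_mono ht)
      (hf_cont.measurable.comp_aemeasurable hq_meas).aestronglyMeasurable,
    integral_eq_lintegral_of_nonneg_ae
      (ae_of_all _ fun s => mul_nonneg (sub_nonneg.2 (K.le_one _)) (hh0 s))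
      ((measurable_const.sub (Φ.mono.measurable.comp monotone_cdf.measurable)).mul
        hh).aestronglyMeasurable,
    lintegral_comp_eq_lintegral_meas_lt_mul _ hq_nonneg hq_meas (fun s _ => hint 0 s)
      (ae_of_all _ fun s => hh0 s)]
  congr 1
  refine setLIntegral_congr_fun measurableSet_Ioi fun s _ => ?_
  rw [Measure.restrict_apply' measurableSet_Ioc, setOf_lt_VaR_inter_Ioc hmeas hMb,
    Φ.measure_Ioc, K.one_of_one_le 1 le_rfl, ENNReal.ofReal_mul (sub_nonneg.2 (K.le_one _))]
end
end
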